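/- Residual collinearity and sign for the shifted Lanczos/CG iterate: Let A be an n×n Hermitian complex matrix, c ∈ ℂ^n nonzero, and let (V_m, T_m, β_m, v_{m+1}) be a Lanczos relation of length m for A with starting vector v_1 = c/‖c‖. Let σ ∈ ℝ be such that T_m − σI is invertible, and define the Galerkin iterate x_m = V_m y where (T_m − σI) y = ‖c‖ e_1. Then the residual satisfies c − (A − σI) x_m = ρ_m v_{m+1} with ρ_m = −β_m ‖c‖ (e_m* (T_m − σI)^{-1} e_1); in particular the residual is a scalar multiple of the next Lanczos vector v_{m+1}. If moreover σ is strictly smaller than every eigenvalue of T_m, then ρ_m = (−1)^m ‖c − (A − σI) x_m‖, i.e. ρ_m has sign (−1)^m. -/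

import Mathlib

open Matrix

/-- A Lanczos relation of length `k` for an `n × n` Hermitian matrix `A` over `𝕜`
with starting unit vector `v`: orthonormal columns `V` with first column `v`, a real
symmetric tridiagonal matrix `T` with positive subdiagonal, `β > 0` and a unit vector
`vNext` orthogonal to the columns of `V`, such that `A V = V T + β vNext eₖ*`. -/
structure LanczosRelation (𝕜 : Type) [RCLike 𝕜] (n k : ℕ)
    (A : Matrix (Fin n) (Fin n) 𝕜) (v : Fin n → 𝕜) where
  kpos : 0 < k
  V : Matrix (Fin n) (Fin k) 𝕜
  T : Matrix (Fin k) (Fin k) ℝ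
  β : ℝ
  vNext : Fin n → 𝕜
  orthonormal : Vᴴ * V = 1
  firstCol : (fun i => V i ⟨0, kpos⟩) = v
  symm : T.IsHermitian
  tridiag : ∀ i j : Fin k, (i : ℕ) + 1 < (j : ℕ) → T i j = 0
  subdiag_pos : ∀ (i : ℕ) (h : i + 1 < k), 0 < T ⟨i + 1, h⟩ ⟨i, by omega⟩
  β_pos : 0 < β
  vNext_unit : star vNext ⬝ᵥ vNext = 1
  vNext_orth : Vᴴ *ᵥ vNext = 0
  relation : A * V = V * T.map (algebraMap ℝ 𝕜) +
      (algebraMap ℝ 𝕜 β) • vecMulVec vNext (Pi.single ⟨k - 1, by omega⟩ 1)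

/-- The Euclidean norm of a complex vector. -/
noncomputable def euclidEnorm {n : ℕ} (c : Fin n → ℂ) : ℝ :=
  Real.sqrt (Complex.re (star c ⬝ᵥ c))

/-!
Applying `A - σI` to `x = V y` and using `A V = V T + β v_{m+1} e_mᵀ` gives
`(A - σI) x = V (T - σI) y + β y_m v_{m+1} = c + β y_m v_{m+1}`, so the residual is
`-β y_m v_{m+1}` with `y_m = ‖c‖ ((T - σI)⁻¹)_{m1}`.

For the sign, Cramer's rule gives `det (T - σI) · y_m = ‖c‖ · det M`, where `M` is `T - σI` with
its last column replaced by `e₁`. Expanding `det M` along that column leaves an upper triangular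
minor whose diagonal is the positive subdiagonal of `T`, so `det M = (-1)^(m-1) ∏ βᵢ`, while
`det (T - σI) = ∏ (λᵢ - σ) > 0` when `σ` lies below the spectrum of `T`.
-/

lemma euclidEnorm_eq_norm {n : ℕ} (c : Fin n → ℂ) : euclidEnorm c = ‖WithLp.toLp 2 c‖ := by
  rw [norm_eq_sqrt_re_inner (𝕜 := ℂ), EuclideanSpace.inner_toLp_toLp, dotProduct_comm]
  rfl

lemma euclidEnorm_pos {n : ℕ} {c : Fin n → ℂ} (hc : c ≠ 0) : 0 < euclidEnorm c := by
  rw [euclidEnorm_eq_norm]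
  exact norm_pos_iff.2 fun h => hc (by simpa using h)

lemma euclidEnorm_ofReal_smul {n : ℕ} (ρ : ℝ) (v : Fin n → ℂ) :
    euclidEnorm ((ρ : ℂ) • v) = |ρ| * euclidEnorm v := by
  rw [euclidEnorm_eq_norm, euclidEnorm_eq_norm, WithLp.toLp_smul, norm_smul, Complex.norm_real,
    Real.norm_eq_abs]

lemma euclidEnorm_eq_one {n : ℕ} {v : Fin n → ℂ} (hv : star v ⬝ᵥ v = 1) : euclidEnorm v = 1 := by
  simp [euclidEnorm, hv]

lemma eq_neg_one_pow_mul_abs_of_mul_pos {R : Type*} [Ring R] [LinearOrder R]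
    [IsStrictOrderedRing R] {ρ : R} (m : ℕ) (h : 0 < (-1) ^ m * ρ) : ρ = (-1) ^ m * |ρ| := by
  rcases neg_one_pow_eq_or R m with hm | hm <;> rw [hm] at h ⊢
  · rw [one_mul] at h ⊢
    exact (abs_of_pos h).symm
  · rw [neg_one_mul] at h ⊢
    rw [abs_of_neg (neg_pos.1 h), neg_neg]

namespace Matrix

variable {R : Type*} [CommRing R]

theorem apply_eq_mul_inv_apply_of_mulVec_eq_smul_single {ι : Type*} [Fintype ι] [DecidableEq ι]
    {B : Matrix ι ι R} (hB : IsUnit B) {y : ι → R} {r : R} {j : ι}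
    (hy : B *ᵥ y = r • Pi.single j 1) (i : ι) : y i = r * B⁻¹ i j := by
  have hdet : IsUnit B.det := (isUnit_iff_isUnit_det B).1 hB
  have := congrArg (B⁻¹ *ᵥ ·) hy
  simp only [mulVec_mulVec, nonsing_inv_mul _ hdet, one_mulVec, mulVec_smul, mulVec_single] at this
  simp [this]

theorem det_updateCol_last_single_zero {k : ℕ} (B : Matrix (Fin (k + 1)) (Fin (k + 1)) R)
    (hB : ∀ i j : Fin k, j < i → B i.succ j.castSucc = 0) :
    (B.updateCol (Fin.last k) (Pi.single 0 1)).det =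
      (-1) ^ k * ∏ i : Fin k, B i.succ i.castSucc := by
  rw [det_succ_column _ (Fin.last k), Finset.sum_eq_single_of_mem 0 (Finset.mem_univ _)]
  · have hminor : (B.updateCol (Fin.last k) (Pi.single 0 1)).submatrix
        (Fin.succAbove 0) (Fin.succAbove (Fin.last k)) = of fun i j => B i.succ j.castSucc := by
      ext i j
      rw [of_apply, submatrix_apply, Fin.succAbove_last, Fin.succAbove_zero,
        updateCol_apply, if_neg (Fin.castSucc_lt_last j).ne]
    have htri : (of fun i j : Fin k => B i.succ j.castSucc).BlockTriangular id :=
      fun i j h => hB i j h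
    rw [hminor, det_of_isUpperTriangular htri]
    simp
  · intro i _ hi
    simp [hi]

theorem det_mul_last_of_mulVec_eq_smul_single_zero {k : ℕ}
    (B : Matrix (Fin (k + 1)) (Fin (k + 1)) R) (hB : ∀ i j : Fin k, j < i → B i.succ j.castSucc = 0)
    {y : Fin (k + 1) → R} {r : R} (hy : B *ᵥ y = r • Pi.single 0 1) :
    B.det * y (Fin.last k) = r * ((-1) ^ k * ∏ i : Fin k, B i.succ i.castSucc) := by
  have hcramer : cramer B (B *ᵥ y) = B.det • y := by
    rw [cramer_eq_adjugate_mulVec, mulVec_mulVec, adjugate_mul, smul_mulVec, one_mulVec]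
  rw [hy, map_smul] at hcramer
  have := congrFun hcramer (Fin.last k)
  rw [Pi.smul_apply, Pi.smul_apply, cramer_apply, det_updateCol_last_single_zero B hB] at this
  simpa [smul_eq_mul] using this.symm

theorem IsHermitian.det_sub_smul_one {ι : Type*} [Fintype ι] [DecidableEq ι]
    {T : Matrix ι ι ℝ} (hT : T.IsHermitian) (σ : ℝ) :
    (T - σ • 1).det = ∏ i, (hT.eigenvalues i - σ) := by
  have h := congrArg (Polynomial.eval σ) hT.charpoly_eq
  rw [eval_charpoly, Polynomial.eval_prod] at h
  rw [← neg_sub, det_neg, smul_one_eq_diagonal, ← scalar_apply, h, ← Finset.card_univ,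
    ← Finset.prod_neg]
  simp

end Matrix

namespace LanczosRelation

variable {𝕜 : Type} [RCLike 𝕜] {n k : ℕ} {A : Matrix (Fin n) (Fin n) 𝕜} {v : Fin n → 𝕜}

theorem shift_mul_V (L : LanczosRelation 𝕜 n (k + 1) A v) (σ : ℝ) :
    (A - (σ : 𝕜) • 1) * L.V = L.V * (L.T - σ • 1).map (algebraMap ℝ 𝕜) +
      (algebraMap ℝ 𝕜 L.β) • vecMulVec L.vNext (Pi.single (Fin.last k) 1) := by
  have hmap : (L.T - σ • 1).map (algebraMap ℝ 𝕜) = L.T.map (algebraMap ℝ 𝕜) - (σ : 𝕜) • 1 := by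
    ext i j
    by_cases h : i = j <;> simp [one_apply, h, Algebra.algebraMap_eq_smul_one, sub_smul]
  have hrel : A * L.V = L.V * L.T.map (algebraMap ℝ 𝕜) +
      (algebraMap ℝ 𝕜 L.β) • vecMulVec L.vNext (Pi.single (Fin.last k) 1) := L.relation
  rw [hmap, Matrix.mul_sub, Matrix.sub_mul, hrel, Matrix.mul_smul, Matrix.smul_mul, Matrix.one_mul,
    Matrix.mul_one]
  abel

theorem shift_mulVec_V_mulVec (L : LanczosRelation 𝕜 n (k + 1) A v) {σ r : ℝ}
    {y : Fin (k + 1) → ℝ} (hy : (L.T - σ • 1) *ᵥ y = r • Pi.single 0 1) :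
    (A - (σ : 𝕜) • 1) *ᵥ (L.V *ᵥ fun i => (y i : 𝕜)) =
      r • v + ((L.β * y (Fin.last k) : ℝ) : 𝕜) • L.vNext := by
  have hmapVec : (L.T - σ • 1).map (algebraMap ℝ 𝕜) *ᵥ (fun i => (y i : 𝕜)) =
      (r : 𝕜) • Pi.single 0 1 := by
    ext i
    calc _ = algebraMap ℝ 𝕜 (((L.T - σ • 1) *ᵥ y) i) := ((algebraMap ℝ 𝕜).map_mulVec _ _ i).symm
      _ = _ := by by_cases hi : i = 0 <;> simp [hy, hi]
  have hfirst : L.V *ᵥ Pi.single 0 1 = v := by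
    ext i
    simpa using congrFun L.firstCol i
  rw [mulVec_mulVec, shift_mul_V, add_mulVec, ← mulVec_mulVec, hmapVec, mulVec_smul, hfirst,
    smul_mulVec, vecMulVec_mulVec, single_one_dotProduct,
    RCLike.real_smul_eq_coe_smul (K := 𝕜) r v, op_smul_eq_smul, smul_smul, RCLike.ofReal_mul]

theorem shift_succ_castSucc_eq_zero_of_lt (L : LanczosRelation 𝕜 n (k + 1) A v) (σ : ℝ)
    {i j : Fin k} (hij : j < i) : (L.T - σ • 1) i.succ j.castSucc = 0 := by
  have hne : i.succ ≠ j.castSucc := by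
    simp only [ne_eq, Fin.ext_iff, Fin.val_succ, Fin.val_castSucc]
    omega
  rw [Matrix.sub_apply, Matrix.smul_apply, one_apply_ne hne, smul_zero, sub_zero, ← L.symm.apply,
    star_trivial]
  exact L.tridiag _ _ (by simp only [Fin.val_succ, Fin.val_castSucc]; omega)

theorem shift_succ_castSucc_pos (L : LanczosRelation 𝕜 n (k + 1) A v) (σ : ℝ) (i : Fin k) :
    0 < (L.T - σ • 1) i.succ i.castSucc := by
  have hne : i.succ ≠ i.castSucc := by simp [Fin.ext_iff]
  rw [Matrix.sub_apply, Matrix.smul_apply, one_apply_ne hne, smul_zero, sub_zero]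
  exact L.subdiag_pos i (by omega)

theorem neg_one_pow_mul_last_pos (L : LanczosRelation 𝕜 n (k + 1) A v) {σ r : ℝ}
    (hσ : ∀ i, σ < L.symm.eigenvalues i) (hr : 0 < r) {y : Fin (k + 1) → ℝ}
    (hy : (L.T - σ • 1) *ᵥ y = r • Pi.single 0 1) : 0 < (-1) ^ k * y (Fin.last k) := by
  have hdet : 0 < (L.T - σ • 1).det := by
    rw [L.symm.det_sub_smul_one]
    exact Finset.prod_pos fun i _ => sub_pos.2 (hσ i)
  have hprod : 0 < ∏ i : Fin k, (L.T - σ • 1) i.succ i.castSucc :=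
    Finset.prod_pos fun i _ => L.shift_succ_castSucc_pos σ i
  have hcramer := det_mul_last_of_mulVec_eq_smul_single_zero _
    (fun i j => L.shift_succ_castSucc_eq_zero_of_lt σ) hy
  have hsq : ((-1 : ℝ) ^ k) ^ 2 = 1 := by rw [← pow_mul, mul_comm, pow_mul, neg_one_sq, one_pow]
  have hsigned : (L.T - σ • 1).det * ((-1) ^ k * y (Fin.last k)) =
      r * ∏ i : Fin k, (L.T - σ • 1) i.succ i.castSucc := by
    linear_combination
      (-1 : ℝ) ^ k * hcramer + r * (∏ i : Fin k, (L.T - σ • 1) i.succ i.castSucc) * hsq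
  refine pos_of_mul_pos_right ?_ hdet.le
  rw [hsigned]
  exact mul_pos hr hprod

end LanczosRelation

theorem shifted_lanczos_residual_collinearity
    {n m : ℕ} {A : Matrix (Fin n) (Fin n) ℂ}
    {c : Fin n → ℂ} (hc : c ≠ 0)
    (L : LanczosRelation ℂ n m A ((euclidEnorm c)⁻¹ • c))
    (σ : ℝ) (hinv : IsUnit (L.T - σ • (1 : Matrix (Fin m) (Fin m) ℝ)))
    (y : Fin m → ℝ)
    (hy : (L.T - σ • (1 : Matrix (Fin m) (Fin m) ℝ)) *ᵥ y
        = euclidEnorm c • (Pi.single (⟨0, L.kpos⟩ : Fin m) 1 : Fin m → ℝ))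
    (x : Fin n → ℂ) (hx : x = L.V *ᵥ (fun i => ((y i : ℝ) : ℂ)))
    (ρ : ℝ)
    (hρ : ρ = -L.β * euclidEnorm c *
        ((L.T - σ • (1 : Matrix (Fin m) (Fin m) ℝ))⁻¹
          ⟨m - 1, by have := L.kpos; omega⟩ ⟨0, L.kpos⟩)) :
    c - (A - (σ : ℂ) • 1) *ᵥ x = (ρ : ℂ) • L.vNext ∧
    ((∀ i, σ < L.symm.eigenvalues i) →
      ρ = (-1) ^ m * euclidEnorm (c - (A - (σ : ℂ) • 1) *ᵥ x)) := by
  obtain ⟨k, rfl⟩ : ∃ k, m = k + 1 := ⟨m - 1, by have := L.kpos; omega⟩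
  have hcpos : 0 < euclidEnorm c := euclidEnorm_pos hc
  replace hy : (L.T - σ • 1) *ᵥ y = euclidEnorm c • Pi.single 0 1 := hy
  have hρ_last : ρ = -(L.β * y (Fin.last k)) := by
    have hρ' : ρ = -L.β * euclidEnorm c * (L.T - σ • 1)⁻¹ (Fin.last k) 0 := hρ
    rw [hρ', apply_eq_mul_inv_apply_of_mulVec_eq_smul_single hinv hy (Fin.last k)]
    ring
  have hAx : (A - (σ : ℂ) • 1) *ᵥ x = c + ((L.β * y (Fin.last k) : ℝ) : ℂ) • L.vNext := by
    have := L.shift_mulVec_V_mulVec hy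
    rw [smul_inv_smul₀ hcpos.ne'] at this
    rw [hx]
    exact this
  have hres : c - (A - (σ : ℂ) • 1) *ᵥ x = (ρ : ℂ) • L.vNext := by
    rw [hAx, hρ_last, Complex.ofReal_neg, neg_smul, sub_add_cancel_left]
  refine ⟨hres, fun hσ => ?_⟩
  have hsign : 0 < (-1) ^ (k + 1) * ρ := by
    have hsigned : (-1) ^ (k + 1) * ρ = L.β * ((-1) ^ k * y (Fin.last k)) := by
      rw [hρ_last, pow_succ]
      ring
    rw [hsigned]
    exact mul_pos L.β_pos (L.neg_one_pow_mul_last_pos hσ hcpos hy)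
  rw [hres, euclidEnorm_ofReal_smul, euclidEnorm_eq_one L.vNext_unit, mul_one]
  exact eq_neg_one_pow_mul_abs_of_mul_pos _ hsign
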